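/- arXiv:2411.10141 — 2 statements merged into one kernel-verified Lean document; each statement's English description precedes it below -/
import Mathlib

section
/- Assume λ_1 is the unique largest eigenvalue of the family (λ_1 > μ_1, and λ_1 > λ_i and λ_1 > μ_i for all i ≥ 2), and let μ* ∈ ℝ satisfy the μ*-condition with respect to u_1. Then (1/m)·log( det(E_m) ) tends to λ_1 + μ* as m → ∞. (Equivalently, the log-exp-supremum of the family, characterised in Theorem 1 as λ_1·u_1 u_1ᵀ + μ*·v_1 v_1ᵀ, has trace λ_1 + μ*.) -/
open Matrix Filter

/-- The symmetric 2×2 matrix with spectral data `λ, μ, u, v`. -/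
noncomputable def Xmat (lam mu : ℝ) (u v : Fin 2 → ℝ) : Matrix (Fin 2) (Fin 2) ℝ :=
  lam • vecMulVec u u + mu • vecMulVec v v

/-- `E_m = Σ_i exp(m·X_i)`. -/
noncomputable def Efam {k : ℕ} (lam mu : Fin k → ℝ) (u v : Fin k → Fin 2 → ℝ)
    (m : ℝ) : Matrix (Fin 2) (Fin 2) ℝ :=
  ∑ i, NormedSpace.exp (m • Xmat (lam i) (mu i) (u i) (v i))

/-- Two vectors of ℝ² are parallel (aligned) if one is a scalar multiple of
the other. -/
def Parallel (a b : Fin 2 → ℝ) : Prop :=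
  ∃ c : ℝ, a = c • b ∨ b = c • a

/-! Since `exp (m • Xᵢ) = e^{mλᵢ} uᵢuᵢᵀ + e^{mμᵢ} vᵢvᵢᵀ`, `E_m` is a positive combination
`∑ⱼ e^{m aⱼ} wⱼwⱼᵀ` of the `2(n+1)` rank-one projections onto the eigenvectors, and the 2×2
Cauchy–Binet identity gives `det E_m = ½ ∑_{j,k} det[wⱼ; wₖ]² e^{m (aⱼ + aₖ)}`. Hence
`(1/m) log det E_m` tends to the largest exponent `aⱼ + aₖ` over pairs with `det[wⱼ; wₖ] ≠ 0`.
Such a pair contains a vector not parallel to `u₁`, so its exponent is at most `λ₁ + μ*`, and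
`u₁` paired with the eigenvector attaining `μ*` realises this bound. -/

open Topology

theorem Matrix.exp_sum_smul_vecMulVec_self {ι : Type*} [Fintype ι] [DecidableEq ι]
    (w : ι → ι → ℝ) (hw : of w * (of w)ᵀ = 1) (d : ι → ℝ) :
    NormedSpace.exp (∑ i, d i • vecMulVec (w i) (w i))
      = ∑ i, Real.exp (d i) • vecMulVec (w i) (w i) := by
  have hconj (e : ι → ℝ) :
      ∑ i, e i • vecMulVec (w i) (w i) = (of w)ᵀ * diagonal e * (of w)ᵀ⁻¹ := by
    ext a b
    rw [inv_eq_left_inv hw, mul_apply]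
    simp only [mul_diagonal, sum_apply, smul_apply, vecMulVec_apply, transpose_apply, of_apply,
      smul_eq_mul]
    exact Finset.sum_congr rfl fun c _ => by ring
  rw [hconj, exp_conj _ _ (IsUnit.of_mul_eq_one_right _ hw), exp_diagonal, hconj]
  congr
  ext i
  simp [Real.exp_eq_exp_ℝ]

theorem exp_smul_Xmat {u v : Fin 2 → ℝ} (hu : u ⬝ᵥ u = 1) (hv : v ⬝ᵥ v = 1)
    (huv : u ⬝ᵥ v = 0) (lam mu m : ℝ) :
    NormedSpace.exp (m • Xmat lam mu u v)
      = Real.exp (m * lam) • vecMulVec u u + Real.exp (m * mu) • vecMulVec v v := by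
  have horth : of ![u, v] * (of ![u, v])ᵀ = 1 := by
    ext i j
    fin_cases i <;> fin_cases j <;>
      simp [mul_apply, ← dotProduct.eq_1, hu, hv, huv, dotProduct_comm v u]
  simpa [Xmat, smul_smul, Fin.sum_univ_two] using
    exp_sum_smul_vecMulVec_self ![u, v] horth ![m * lam, m * mu]

theorem Efam_eq_sum {k : ℕ} {lam mu : Fin k → ℝ} {u v : Fin k → Fin 2 → ℝ}
    (hu : ∀ i, u i ⬝ᵥ u i = 1) (hv : ∀ i, v i ⬝ᵥ v i = 1) (huv : ∀ i, u i ⬝ᵥ v i = 0) (m : ℝ) :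
    Efam lam mu u v m = ∑ j : Fin k × Fin 2, Real.exp (m * ![lam j.1, mu j.1] j.2) •
      vecMulVec (![u j.1, v j.1] j.2) (![u j.1, v j.1] j.2) := by
  simp [Efam, exp_smul_Xmat (hu _) (hv _) (huv _), Fintype.sum_prod_type, Fin.sum_univ_two]

theorem Matrix.det_of_rows_fin_two {R : Type*} [CommRing R] (x y : Fin 2 → R) :
    (of ![x, y]).det = x 0 * y 1 - x 1 * y 0 := by
  simp [det_fin_two]

theorem Matrix.two_mul_det_sum_smul_vecMulVec_self {R ι : Type*} [CommRing R] [Fintype ι]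
    (c : ι → R) (w : ι → Fin 2 → R) :
    2 * (∑ i, c i • vecMulVec (w i) (w i)).det
      = ∑ i, ∑ j, c i * c j * (of ![w i, w j]).det ^ 2 := by
  have hterm (i j : ι) : c i * c j * (of ![w i, w j]).det ^ 2
      = c i * (w i 0 * w i 0) * (c j * (w j 1 * w j 1))
        + c i * (w i 1 * w i 1) * (c j * (w j 0 * w j 0))
        - 2 * (c i * (w i 0 * w i 1) * (c j * (w j 1 * w j 0))) := by
    rw [det_of_rows_fin_two]; ring
  simp only [hterm, Finset.sum_add_distrib, Finset.sum_sub_distrib, ← Finset.mul_sum,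
    ← Finset.sum_mul]
  simp only [det_fin_two, sum_apply, smul_apply, vecMulVec_apply, smul_eq_mul]
  ring

theorem Matrix.det_sum_exp_smul_vecMulVec_self {J : Type*} [Fintype J] (a : J → ℝ)
    (w : J → Fin 2 → ℝ) (m : ℝ) :
    (∑ j, Real.exp (m * a j) • vecMulVec (w j) (w j)).det
      = ∑ p : J × J, (of ![w p.1, w p.2]).det ^ 2 / 2 * Real.exp (m * (a p.1 + a p.2)) := by
  rw [Fintype.sum_prod_type, ← mul_right_inj' (two_ne_zero' ℝ),
    two_mul_det_sum_smul_vecMulVec_self, Finset.mul_sum]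
  refine Finset.sum_congr rfl fun i _ => ?_
  rw [Finset.mul_sum]
  refine Finset.sum_congr rfl fun j _ => ?_
  rw [mul_add, Real.exp_add]
  ring

theorem Parallel.exists_eq_smul {x y : Fin 2 → ℝ} (hy : y ≠ 0) (h : Parallel x y) :
    ∃ c : ℝ, x = c • y := by
  obtain ⟨c, h | rfl⟩ := h
  · exact ⟨c, h⟩
  · have hc : c ≠ 0 := by rintro rfl; simp at hy
    exact ⟨c⁻¹, by rw [smul_smul, inv_mul_cancel₀ hc, one_smul]⟩

theorem parallel_of_det_eq_zero {x y : Fin 2 → ℝ} (hy : y ≠ 0) (h : (of ![x, y]).det = 0) :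
    Parallel x y := by
  have hyy : y ⬝ᵥ y ≠ 0 := by rwa [Ne, dotProduct_self_eq_zero]
  rw [det_of_rows_fin_two] at h
  simp only [dotProduct, Fin.sum_univ_two] at hyy
  refine ⟨(x ⬝ᵥ y) / (y ⬝ᵥ y), Or.inl (funext fun k => ?_)⟩
  fin_cases k <;>
    simp only [dotProduct, Fin.sum_univ_two, Pi.smul_apply, smul_eq_mul, Fin.zero_eta,
      Fin.mk_one] <;>
    rw [div_mul_eq_mul_div, eq_div_iff hyy]
  · linear_combination y 1 * h
  · linear_combination -(y 0) * h

theorem det_eq_zero_of_parallel_of_parallel {x y z : Fin 2 → ℝ} (hz : z ≠ 0)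
    (hx : Parallel x z) (hy : Parallel y z) : (of ![x, y]).det = 0 := by
  obtain ⟨a, rfl⟩ := hx.exists_eq_smul hz
  obtain ⟨b, rfl⟩ := hy.exists_eq_smul hz
  simp only [det_of_rows_fin_two, Pi.smul_apply, smul_eq_mul]
  ring

theorem add_le_add_of_det_ne_zero {J : Type*} {a : J → ℝ} {w : J → Fin 2 → ℝ}
    {z : Fin 2 → ℝ} {L M : ℝ} (hz : z ≠ 0) (hL : ∀ j, a j ≤ L)
    (hM : ∀ j, ¬ Parallel (w j) z → a j ≤ M) {j k : J} (h : (of ![w j, w k]).det ≠ 0) :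
    a j + a k ≤ L + M := by
  by_cases hj : Parallel (w j) z
  · have hk : ¬ Parallel (w k) z := fun hk => h (det_eq_zero_of_parallel_of_parallel hz hj hk)
    linarith [hL j, hM k hk]
  · linarith [hM j hj, hL k]

theorem tendsto_inv_mul_log_of_le_mul_exp {f : ℝ → ℝ} {a b S : ℝ} (ha : 0 < a)
    (hlo : ∀ᶠ m in atTop, a * Real.exp (m * S) ≤ f m)
    (hhi : ∀ᶠ m in atTop, f m ≤ b * Real.exp (m * S)) :
    Tendsto (fun m => (1 / m) * Real.log (f m)) atTop (𝓝 S) := by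
  have hlog : ∀ᶠ m in atTop,
      Real.log a ≤ Real.log (f m) - m * S ∧ Real.log (f m) - m * S ≤ Real.log b := by
    filter_upwards [hlo, hhi] with m hl hh
    have hf : 0 < f m := lt_of_lt_of_le (by positivity) hl
    have hb : 0 < b := pos_of_mul_pos_left (hf.trans_le hh) (Real.exp_pos _).le
    have hl' := Real.log_le_log (by positivity) hl
    have hh' := Real.log_le_log hf hh
    rw [Real.log_mul ha.ne' (Real.exp_ne_zero _), Real.log_exp] at hl'
    rw [Real.log_mul hb.ne' (Real.exp_ne_zero _), Real.log_exp] at hh'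
    constructor <;> linarith
  have hlim (c : ℝ) : Tendsto (fun m : ℝ => S + c / m) atTop (𝓝 S) := by
    simpa using (tendsto_const_nhds.div_atTop tendsto_id).const_add S
  have hsplit : ∀ᶠ m in atTop, (1 / m) * Real.log (f m) = S + (Real.log (f m) - m * S) / m := by
    filter_upwards [eventually_ne_atTop 0] with m hm
    field_simp
    ring
  refine tendsto_of_tendsto_of_tendsto_of_le_of_le' (hlim (Real.log a)) (hlim (Real.log b)) ?_ ?_ <;>
    filter_upwards [hlog, hsplit, eventually_gt_atTop 0] with m h hs hm <;>
    rw [hs] <;> gcongr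
  exacts [h.1, h.2]

theorem tendsto_inv_mul_log_sum_mul_exp {ι : Type*} [Fintype ι] {c s : ι → ℝ} {S : ℝ}
    (hc : ∀ p, 0 ≤ c p) (hs : ∀ p, 0 < c p → s p ≤ S) {p₀ : ι} (hp₀ : 0 < c p₀)
    (hsp₀ : s p₀ = S) :
    Tendsto (fun m => (1 / m) * Real.log (∑ p, c p * Real.exp (m * s p))) atTop (𝓝 S) := by
  refine tendsto_inv_mul_log_of_le_mul_exp (b := ∑ p, c p) hp₀ (.of_forall fun m => ?_) ?_
  · rw [← hsp₀]
    exact Finset.single_le_sum (f := fun p => c p * Real.exp (m * s p))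
      (fun p _ => mul_nonneg (hc p) (Real.exp_pos _).le) (Finset.mem_univ p₀)
  · filter_upwards [eventually_ge_atTop 0] with m hm
    rw [Finset.sum_mul]
    refine Finset.sum_le_sum fun p _ => ?_
    rcases (hc p).eq_or_lt with h | h
    · simp [← h]
    · gcongr
      exact hs p h

theorem log_det_tendsto_general (n : ℕ) (lam mu : Fin (n + 1) → ℝ)
    (u v : Fin (n + 1) → Fin 2 → ℝ)
    (hu : ∀ i, u i ⬝ᵥ u i = 1) (hv : ∀ i, v i ⬝ᵥ v i = 1)
    (huv : ∀ i, u i ⬝ᵥ v i = 0)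
    (hmu : mu 0 < lam 0)
    (hmax : ∀ i, i ≠ 0 → lam i < lam 0 ∧ mu i < lam 0)
    (μs : ℝ)
    (hbd : ∀ i, (¬ Parallel (u i) (u 0) → lam i ≤ μs) ∧
                (¬ Parallel (v i) (u 0) → mu i ≤ μs))
    (hatt : (∃ i, ¬ Parallel (u i) (u 0) ∧ μs = lam i) ∨
            (∃ i, ¬ Parallel (v i) (u 0) ∧ μs = mu i)) :
    Tendsto (fun m : ℝ => (1 / m) * Real.log ((Efam lam mu u v m).det))
      atTop (nhds (lam 0 + μs)) := by
  set a : Fin (n + 1) × Fin 2 → ℝ := fun j => ![lam j.1, mu j.1] j.2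
  set w : Fin (n + 1) × Fin 2 → Fin 2 → ℝ := fun j => ![u j.1, v j.1] j.2
  have hu₀ : u 0 ≠ 0 := fun h => by simpa [h] using hu 0
  have ha_le : ∀ j, a j ≤ lam 0 := by
    rintro ⟨i, k⟩
    rcases eq_or_ne i 0 with rfl | hi <;> fin_cases k
    exacts [le_rfl, hmu.le, (hmax i hi).1.le, (hmax i hi).2.le]
  have ha_μs : ∀ j, ¬ Parallel (w j) (u 0) → a j ≤ μs := by
    rintro ⟨i, k⟩
    fin_cases k
    exacts [(hbd i).1, (hbd i).2]
  obtain ⟨j₀, hj₀, hμs⟩ : ∃ j, ¬ Parallel (w j) (u 0) ∧ μs = a j := by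
    rcases hatt with ⟨i, hi, h⟩ | ⟨i, hi, h⟩
    exacts [⟨(i, 0), hi, h⟩, ⟨(i, 1), hi, h⟩]
  have hdet (m : ℝ) : (Efam lam mu u v m).det = ∑ p : _ × _,
      (of ![w p.1, w p.2]).det ^ 2 / 2 * Real.exp (m * (a p.1 + a p.2)) := by
    rw [Efam_eq_sum hu hv huv, Matrix.det_sum_exp_smul_vecMulVec_self]
  simp only [hdet]
  refine tendsto_inv_mul_log_sum_mul_exp (fun p => by positivity) (fun p hp => ?_)
    (p₀ := (j₀, (0, 0))) ?_ (by simp [a, hμs, add_comm])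
  · exact add_le_add_of_det_ne_zero hu₀ ha_le ha_μs fun h => by simp [h] at hp
  · have hj₀_det : (of ![w j₀, u 0]).det ≠ 0 := mt (parallel_of_det_eq_zero hu₀) hj₀
    positivity

/-- if `λ_1` is the unique largest eigenvalue and `μ*` satisfies
the μ*-condition w.r.t. `u_1`, then `(1/m)·log(det(E_m)) → λ_1 + μ*` as
`m → ∞`. -/
theorem log_det_tendsto (n : ℕ) (lam mu : Fin (n + 1) → ℝ)
    (u v : Fin (n + 1) → Fin 2 → ℝ)
    (hu : ∀ i, u i ⬝ᵥ u i = 1) (hv : ∀ i, v i ⬝ᵥ v i = 1)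
    (huv : ∀ i, u i ⬝ᵥ v i = 0) (hle : ∀ i, mu i ≤ lam i)
    (hmu : mu 0 < lam 0)
    (hmax : ∀ i, i ≠ 0 → lam i < lam 0 ∧ mu i < lam 0)
    (μs : ℝ)
    (hbd : ∀ i, (¬ Parallel (u i) (u 0) → lam i ≤ μs) ∧
                (¬ Parallel (v i) (u 0) → mu i ≤ μs))
    (hatt : (∃ i, ¬ Parallel (u i) (u 0) ∧ μs = lam i) ∨
            (∃ i, ¬ Parallel (v i) (u 0) ∧ μs = mu i)) :
    Tendsto (fun m : ℝ => (1 / m) * Real.log ((Efam lam mu u v m).det))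
      atTop (nhds (lam 0 + μs)) :=
  log_det_tendsto_general n lam mu u v hu hv huv hmu hmax μs hbd hatt
end

section
/- Let n ≥ 2 and assume: λ_1 is the unique largest eigenvalue of the family (λ_1 > μ_1, and λ_1 > λ_i and λ_1 > μ_i for all i ≥ 2); λ_2 is the unique second largest eigenvalue (μ_1 < λ_2, μ_i < λ_2 for all i ≥ 2, and λ_i < λ_2 for all i ≥ 3); and ⟨u_2, u_1⟩ ≠ 0 (the eigenvector of λ_2 is not perpendicular to u_1). Then there exists ε > 0 such that the matrix S' := λ_1·u_1 u_1ᵀ + (λ_2 − ε)·v_1 v_1ᵀ satisfies: S' − X_i is positive semidefinite for every i ∈ {1,…,n}; i.e. S' ∈ U(𝒳). (Lemma 7.) -/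
open Matrix

/-!
Write `a = ⟨u₁, x⟩`, `b = ⟨v₁, x⟩`, `p = ⟨uᵢ, x⟩`, `q = ⟨vᵢ, x⟩`, so that
`a² + b² = p² + q² = ‖x‖²`. Against `X₁` and against `Xᵢ` for `i ≥ 3` the matrix `S'` keeps the
margins `λ₂ - ε - μ₁` and `λ₂ - ε - λᵢ`, positive for small `ε`. Against `X₂` the quadratic form
of `S - X₂`, where `S = λ₁ u₁u₁ᵀ + λ₂ v₁v₁ᵀ`, is `(λ₁ - λ₂) a² + (λ₂ - μ₂) q²`. Since
`c = ⟨u₂, u₁⟩ ≠ 0`, the vectors `u₁` and `v₂` are independent, quantitatively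
`c² ‖x‖² ≤ 2 (a² + q²)`; so this form is at least `min (λ₁ - λ₂, λ₂ - μ₂) c² ‖x‖² / 2` and
absorbs the perturbation `-ε b²` for small `ε`. Finitely many constraints, each holding for all
small `ε > 0`, hold simultaneously for some `ε > 0`.
-/

open Filter Topology

structure IsOrthonormalPair (u v : Fin 2 → ℝ) : Prop where
  dotProduct_self_left : u ⬝ᵥ u = 1
  dotProduct_self_right : v ⬝ᵥ v = 1
  dotProduct_eq_zero : u ⬝ᵥ v = 0

namespace IsOrthonormalPair

variable {u v : Fin 2 → ℝ}

theorem vecMulVec_add_vecMulVec_eq_one (h : IsOrthonormalPair u v) :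
    vecMulVec u u + vecMulVec v v = 1 := by
  obtain ⟨hu, hv, huv⟩ := h
  simp only [dotProduct, Fin.sum_univ_two] at hu hv huv
  -- the matrix with rows `u, v` is orthogonal, hence so is its transpose
  have hrows : of ![u, v] * (of ![u, v])ᵀ = 1 := by
    ext i j
    fin_cases i <;> fin_cases j <;> simp [mul_apply] <;> linarith
  rw [← mul_eq_one_comm.1 hrows]
  ext i j
  simp [mul_apply, vecMulVec_apply]

theorem sum_dotProduct_mul_dotProduct (h : IsOrthonormalPair u v) (y z : Fin 2 → ℝ) :
    (u ⬝ᵥ y) * (u ⬝ᵥ z) + (v ⬝ᵥ y) * (v ⬝ᵥ z) = y ⬝ᵥ z :=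
  calc (u ⬝ᵥ y) * (u ⬝ᵥ z) + (v ⬝ᵥ y) * (v ⬝ᵥ z)
      = y ⬝ᵥ ((vecMulVec u u + vecMulVec v v) *ᵥ z) := by
        simp only [add_mulVec, vecMulVec_mulVec, op_smul_eq_smul, dotProduct_add, dotProduct_smul,
          smul_eq_mul, dotProduct_comm y u, dotProduct_comm y v]
        ring
    _ = y ⬝ᵥ z := by rw [h.vecMulVec_add_vecMulVec_eq_one, one_mulVec]

theorem sq_dotProduct_add_sq_dotProduct (h : IsOrthonormalPair u v) (x : Fin 2 → ℝ) :
    (u ⬝ᵥ x) ^ 2 + (v ⬝ᵥ x) ^ 2 = x ⬝ᵥ x := by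
  simpa only [sq] using h.sum_dotProduct_mul_dotProduct x x

theorem sq_dotProduct_mul_dotProduct_self_le (h : IsOrthonormalPair u v) {w : Fin 2 → ℝ}
    (hw : w ⬝ᵥ w = 1) (x : Fin 2 → ℝ) :
    (u ⬝ᵥ w) ^ 2 * (x ⬝ᵥ x) ≤ 2 * ((w ⬝ᵥ x) ^ 2 + (v ⬝ᵥ x) ^ 2) := by
  have hwx := h.sum_dotProduct_mul_dotProduct w x
  have hww := h.sum_dotProduct_mul_dotProduct w w
  rw [hw] at hww
  rw [← h.sq_dotProduct_add_sq_dotProduct x, ← hwx]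
  -- with `c² + d² = 1` the difference is `(c p + 2 d q)² + c² q²`
  nlinarith [sq_nonneg ((u ⬝ᵥ w) * (u ⬝ᵥ x) + 2 * (v ⬝ᵥ w) * (v ⬝ᵥ x)),
    sq_nonneg ((u ⬝ᵥ w) * (v ⬝ᵥ x))]

end IsOrthonormalPair

section Xmat

variable {l m l' m' : ℝ} {u v u' v' : Fin 2 → ℝ}

theorem dotProduct_Xmat_mulVec (x : Fin 2 → ℝ) :
    x ⬝ᵥ (Xmat l m u v *ᵥ x) = l * (u ⬝ᵥ x) ^ 2 + m * (v ⬝ᵥ x) ^ 2 := by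
  simp [Xmat, add_mulVec, smul_mulVec, vecMulVec_mulVec, dotProduct_comm x]
  ring

theorem isHermitian_Xmat : (Xmat l m u v).IsHermitian := by
  simp [Xmat, IsHermitian]

theorem posSemidef_Xmat_sub_Xmat_iff :
    (Xmat l m u v - Xmat l' m' u' v').PosSemidef ↔
      ∀ x, l' * (u' ⬝ᵥ x) ^ 2 + m' * (v' ⬝ᵥ x) ^ 2 ≤ l * (u ⬝ᵥ x) ^ 2 + m * (v ⬝ᵥ x) ^ 2 := by
  simp only [posSemidef_iff_dotProduct_mulVec, isHermitian_Xmat.sub isHermitian_Xmat, true_and,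
    star_trivial, sub_mulVec, dotProduct_sub, dotProduct_Xmat_mulVec, sub_nonneg]

theorem posSemidef_Xmat_sub_Xmat_of_le_right (h : m' ≤ m) :
    (Xmat l m u v - Xmat l m' u v).PosSemidef :=
  posSemidef_Xmat_sub_Xmat_iff.2 fun x => by gcongr

theorem posSemidef_Xmat_sub_Xmat_of_le (h : IsOrthonormalPair u v)
    (h' : IsOrthonormalPair u' v') (hl' : m' ≤ l') (hm : l' ≤ m) (hl : m ≤ l) :
    (Xmat l m u v - Xmat l' m' u' v').PosSemidef := by
  refine posSemidef_Xmat_sub_Xmat_iff.2 fun x => ?_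
  have hx : 0 ≤ x ⬝ᵥ x := by rw [← h.sq_dotProduct_add_sq_dotProduct x]; positivity
  calc l' * (u' ⬝ᵥ x) ^ 2 + m' * (v' ⬝ᵥ x) ^ 2 ≤ l' * (x ⬝ᵥ x) := by
        rw [← h'.sq_dotProduct_add_sq_dotProduct x]; nlinarith [sq_nonneg (v' ⬝ᵥ x)]
    _ ≤ m * (x ⬝ᵥ x) := by gcongr
    _ ≤ l * (u ⬝ᵥ x) ^ 2 + m * (v ⬝ᵥ x) ^ 2 := by
        rw [← h.sq_dotProduct_add_sq_dotProduct x]; nlinarith [sq_nonneg (u ⬝ᵥ x)]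

theorem posSemidef_Xmat_sub_Xmat_of_le_min (h : IsOrthonormalPair u v)
    (h' : IsOrthonormalPair u' v') (hl : m ≤ l) (hm : m' ≤ m) {ε : ℝ} (hε : 0 ≤ ε)
    (hεle : ε ≤ min (l - m) (m - m') * (u' ⬝ᵥ u) ^ 2 / 2) :
    (Xmat l (m - ε) u v - Xmat m m' u' v').PosSemidef := by
  refine posSemidef_Xmat_sub_Xmat_iff.2 fun x => ?_
  have hx := h.sq_dotProduct_add_sq_dotProduct x
  have hx' := h'.sq_dotProduct_add_sq_dotProduct x
  have hgap := h'.sq_dotProduct_mul_dotProduct_self_le h.dotProduct_self_left x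
  set α := min (l - m) (m - m')
  have hα : 0 ≤ α := le_min (sub_nonneg.2 hl) (sub_nonneg.2 hm)
  have hslack : ε * (v ⬝ᵥ x) ^ 2 ≤ (l - m) * (u ⬝ᵥ x) ^ 2 + (m - m') * (v' ⬝ᵥ x) ^ 2 := calc
    ε * (v ⬝ᵥ x) ^ 2 ≤ ε * (x ⬝ᵥ x) := by
        gcongr; rw [← hx]; exact le_add_of_nonneg_left (sq_nonneg _)
    _ ≤ α * (u' ⬝ᵥ u) ^ 2 / 2 * (x ⬝ᵥ x) := by gcongr; rw [← hx]; positivity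
    _ ≤ α * ((u ⬝ᵥ x) ^ 2 + (v' ⬝ᵥ x) ^ 2) := by
        linarith [mul_le_mul_of_nonneg_left hgap hα]
    _ ≤ (l - m) * (u ⬝ᵥ x) ^ 2 + (m - m') * (v' ⬝ᵥ x) ^ 2 := by
        rw [mul_add]; gcongr; exacts [min_le_left _ _, min_le_right _ _]
  linear_combination hslack - m * hx + m * hx'

end Xmat

theorem lowered_les_still_upper_bound_general (n : ℕ) (lam mu : Fin (n + 2) → ℝ)
    (u v : Fin (n + 2) → Fin 2 → ℝ)
    (hu : ∀ i, u i ⬝ᵥ u i = 1) (hv : ∀ i, v i ⬝ᵥ v i = 1)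
    (huv : ∀ i, u i ⬝ᵥ v i = 0) (hle : ∀ i, mu i ≤ lam i)
    (hmax : ∀ i, i ≠ 0 → lam i < lam 0 ∧ mu i < lam 0)
    (hsecond : ∀ i, mu i < lam 1)
    (hsecond' : ∀ i, i ≠ 0 → i ≠ 1 → lam i < lam 1)
    (hperp : u 1 ⬝ᵥ u 0 ≠ 0) :
    ∃ ε : ℝ, 0 < ε ∧ ∀ i,
      (Xmat (lam 0) (lam 1 - ε) (u 0) (v 0) -
        Xmat (lam i) (mu i) (u i) (v i)).PosSemidef := by
  have hON i : IsOrthonormalPair (u i) (v i) := ⟨hu i, hv i, huv i⟩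
  have hlam : lam 1 < lam 0 := (hmax 1 one_ne_zero).1
  have hsmall : ∀ i, ∀ᶠ ε in 𝓝[>] (0 : ℝ),
      (Xmat (lam 0) (lam 1 - ε) (u 0) (v 0) - Xmat (lam i) (mu i) (u i) (v i)).PosSemidef := by
    intro i
    rcases eq_or_ne i 0 with rfl | hi0
    · filter_upwards [Ioc_mem_nhdsGT (sub_pos.2 (hsecond 0))] with ε hε
      exact posSemidef_Xmat_sub_Xmat_of_le_right (by linarith [hε.2])
    rcases eq_or_ne i 1 with rfl | hi1
    · have hδ : 0 < min (lam 0 - lam 1) (lam 1 - mu 1) * (u 1 ⬝ᵥ u 0) ^ 2 / 2 :=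
        half_pos <| mul_pos (lt_min (sub_pos.2 hlam) (sub_pos.2 (hsecond 1)))
          (sq_pos_of_ne_zero hperp)
      filter_upwards [Ioc_mem_nhdsGT hδ] with ε hε
      exact posSemidef_Xmat_sub_Xmat_of_le_min (hON 0) (hON 1) hlam.le (hsecond 1).le hε.1.le hε.2
    · filter_upwards [Ioc_mem_nhdsGT (sub_pos.2 (hsecond' i hi0 hi1))] with ε hε
      exact posSemidef_Xmat_sub_Xmat_of_le (hON 0) (hON i) (hle i) (by linarith [hε.2])
        (by linarith [hε.1])
  exact (eventually_mem_nhdsWithin.and (eventually_all.2 hsmall)).exists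

/-- Lemma 7: if `λ_1` is the unique largest and `λ_2` the
unique second largest eigenvalue of the family (here the family has `n + 2`
members with indices `0 ↔ 1`, `1 ↔ 2`), and the eigenvector of `λ_2` is not
perpendicular to `u_1`, then for some `ε > 0` the matrix
`S' = λ_1·u_1 u_1ᵀ + (λ_2 − ε)·v_1 v_1ᵀ` is still a Loewner upper bound of
the family. -/
theorem lowered_les_still_upper_bound (n : ℕ) (lam mu : Fin (n + 2) → ℝ)
    (u v : Fin (n + 2) → Fin 2 → ℝ)
    (hu : ∀ i, u i ⬝ᵥ u i = 1) (hv : ∀ i, v i ⬝ᵥ v i = 1)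
    (huv : ∀ i, u i ⬝ᵥ v i = 0) (hle : ∀ i, mu i ≤ lam i)
    (hmu : mu 0 < lam 0)
    (hmax : ∀ i, i ≠ 0 → lam i < lam 0 ∧ mu i < lam 0)
    (hsecond : ∀ i, mu i < lam 1)
    (hsecond' : ∀ i, i ≠ 0 → i ≠ 1 → lam i < lam 1)
    (hperp : u 1 ⬝ᵥ u 0 ≠ 0) :
    ∃ ε : ℝ, 0 < ε ∧ ∀ i,
      (Xmat (lam 0) (lam 1 - ε) (u 0) (v 0) -
        Xmat (lam i) (mu i) (u i) (v i)).PosSemidef :=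
  lowered_les_still_upper_bound_general n lam mu u v hu hv huv hle hmax hsecond hsecond' hperp
end
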